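/- For any Boolean function f : {0,1}^n → {0,1}, the energy complexity of f satisfies EC(f) ≤ 3n − 2. -/

import Mathlib

/-- A gate in a Boolean circuit over the standard basis `{∨₂, ∧₂, ¬}`:
input gates labelled by variables, constant gates, and `∧`/`∨`/`¬` gates
whose arguments are (indices of) earlier gates. -/
inductive Gate (n : ℕ) : Type where
  | input : Fin n → Gate n
  | const : Bool → Gate n
  | and : ℕ → ℕ → Gate n
  | or : ℕ → ℕ → Gate n
  | not : ℕ → Gate n
deriving DecidableEq

/-- The indices of the incoming gates of a gate. -/
def Gate.deps {n : ℕ} : Gate n → List ℕ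
  | .and a b => [a, b]
  | .or a b => [a, b]
  | .not a => [a]
  | _ => []

/-- Inner gates are the non-input (and non-constant) gates, i.e. `∧`, `∨`, `¬` gates. -/
def Gate.isInner {n : ℕ} : Gate n → Bool
  | .and _ _ => true
  | .or _ _ => true
  | .not _ => true
  | _ => false

/-- A Boolean circuit over the standard basis on `n` input variables: a sequence of
gates (topologically sorted, so each gate only takes earlier gates as inputs,
which makes the underlying graph acyclic) together with a designated output gate. -/
structure Circuit (n : ℕ) : Type where
  size : ℕ
  gates : Fin size → Gate n
  out : Fin size
  wf : ∀ i : Fin size, ∀ j ∈ (gates i).deps, j < (i : ℕ)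

/-- The Boolean value of gate `i` of circuit `C` under input `x`. -/
def Circuit.evalGate {n : ℕ} (C : Circuit n) (x : Fin n → Bool) (i : ℕ) (h : i < C.size) :
    Bool :=
  match hg : C.gates ⟨i, h⟩ with
  | .input j => x j
  | .const b => b
  | .not a =>
      have ha : a < i := C.wf ⟨i, h⟩ a (by rw [hg]; simp [Gate.deps])
      ! C.evalGate x a (ha.trans h)
  | .and a b =>
      have ha : a < i := C.wf ⟨i, h⟩ a (by rw [hg]; simp [Gate.deps])
      have hb : b < i := C.wf ⟨i, h⟩ b (by rw [hg]; simp [Gate.deps])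
      C.evalGate x a (ha.trans h) && C.evalGate x b (hb.trans h)
  | .or a b =>
      have ha : a < i := C.wf ⟨i, h⟩ a (by rw [hg]; simp [Gate.deps])
      have hb : b < i := C.wf ⟨i, h⟩ b (by rw [hg]; simp [Gate.deps])
      C.evalGate x a (ha.trans h) || C.evalGate x b (hb.trans h)
termination_by i

/-- The output of circuit `C` on input `x`. -/
def Circuit.output {n : ℕ} (C : Circuit n) (x : Fin n → Bool) : Bool :=
  C.evalGate x C.out C.out.isLt

/-- `C` computes the Boolean function `f`. -/
def Circuit.Computes {n : ℕ} (C : Circuit n) (f : (Fin n → Bool) → Bool) : Prop :=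
  ∀ x, C.output x = f x

/-- The number of activated inner gates of `C` under input `x`. -/
def Circuit.energyAt {n : ℕ} (C : Circuit n) (x : Fin n → Bool) : ℕ :=
  (Finset.univ.filter fun i : Fin C.size =>
    (C.gates i).isInner = true ∧ C.evalGate x i i.isLt = true).card

/-- The energy complexity `EC(C)` of a circuit `C`: the maximum number of
activated inner gates over all inputs. -/
def Circuit.energy {n : ℕ} (C : Circuit n) : ℕ :=
  Finset.univ.sup fun x : Fin n → Bool => C.energyAt x

/-- The energy complexity `EC(f)` of a Boolean function `f`: the minimum of `EC(C)`
over all circuits `C` computing `f`. -/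
noncomputable def EC {n : ℕ} (f : (Fin n → Bool) → Bool) : ℕ :=
  sInf {k | ∃ C : Circuit n, C.Computes f ∧ C.energy = k}

/-!
Read the input bits `x₀, …, x_{n-1}` along a binary decision trie. For every word `w` of length
`2 ≤ d ≤ n - 1` an `∧`-gate tests whether `x` begins with `w`, from the test for the word one bit
shorter and a literal; words of length one are tested by the literals themselves. At depth `n - 1`
the test is conjoined with the literal or constant computing `f` on the two completions of `w`,
and a binary `∨`-tree collects these back to the root. On a given input a prefix test fires only
for a prefix of `x`, and so does a gate of the `∧`/`∨`-tree at word `w`. So at most one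
prefix test at each depth `2, …, n - 1`, one gate of the tree at each depth `0, …, n - 1`, and the
`n` negations fire: `(n - 2) + n + n = 3n - 2`. For `n ≤ 1`, `f` is a literal or a constant.
-/

variable {n : ℕ}

namespace Gate

def eval (x : Fin n → Bool) (v : ℕ → Bool) : Gate n → Bool
  | .input j => x j
  | .const b => b
  | .and a b => v a && v b
  | .or a b => v a || v b
  | .not a => !v a

theorem eval_congr (x : Fin n → Bool) {v w : ℕ → Bool} (g : Gate n)
    (h : ∀ j ∈ g.deps, v j = w j) : g.eval x v = g.eval x w := by
  cases g <;> simp_all [eval, deps]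

end Gate

namespace Circuit

theorem evalGate_eq_eval (C : Circuit n) (x : Fin n → Bool) (i : ℕ) (h : i < C.size) :
    C.evalGate x i h =
      (C.gates ⟨i, h⟩).eval x fun j => if hj : j < C.size then C.evalGate x j hj else false := by
  have hwf := C.wf ⟨i, h⟩
  have hlt : ∀ j < i, j < C.size := fun j hj => hj.trans h
  rw [evalGate]
  split <;> rename_i hg <;> simp_all [Gate.eval, Gate.deps]

def Consistent (C : Circuit n) (x : Fin n → Bool) (V : ℕ → Bool) : Prop :=
  ∀ i (h : i < C.size), V i = (C.gates ⟨i, h⟩).eval x V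

theorem evalGate_eq_of_consistent {C : Circuit n} {x : Fin n → Bool} {V : ℕ → Bool}
    (hV : C.Consistent x V) (i : ℕ) (h : i < C.size) : C.evalGate x i h = V i := by
  induction i using Nat.strong_induction_on with
  | _ i ih =>
    rw [evalGate_eq_eval, hV i h]
    refine Gate.eval_congr x _ fun j hj => ?_
    have hji := C.wf ⟨i, h⟩ j hj
    rw [dif_pos (hji.trans h), ih j hji]

end Circuit

theorem EC_le_energy {f : (Fin n → Bool) → Bool} {C : Circuit n} (hC : C.Computes f) :
    EC f ≤ C.energy :=
  Nat.sInf_le ⟨C, hC, rfl⟩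

inductive DagGate (n : ℕ) (α : Type*) where
  | input : Fin n → DagGate n α
  | const : Bool → DagGate n α
  | and : α → α → DagGate n α
  | or : α → α → DagGate n α
  | not : α → DagGate n α

namespace DagGate

variable {α : Type*}

def deps : DagGate n α → List α
  | .and a b => [a, b]
  | .or a b => [a, b]
  | .not a => [a]
  | _ => []

def isInner : DagGate n α → Bool
  | .and _ _ => true
  | .or _ _ => true
  | .not _ => true
  | _ => false

def eval (x : Fin n → Bool) (v : α → Bool) : DagGate n α → Bool
  | .input j => x j
  | .const b => b
  | .and a b => v a && v b
  | .or a b => v a || v b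
  | .not a => !v a

def toGate (idx : α → ℕ) : DagGate n α → Gate n
  | .input j => .input j
  | .const b => .const b
  | .and a b => .and (idx a) (idx b)
  | .or a b => .or (idx a) (idx b)
  | .not a => .not (idx a)

variable (idx : α → ℕ) (g : DagGate n α)

theorem deps_toGate : (g.toGate idx).deps = g.deps.map idx := by
  cases g <;> rfl

theorem isInner_toGate : (g.toGate idx).isInner = g.isInner := by
  cases g <;> rfl

theorem eval_toGate (x : Fin n → Bool) (V : ℕ → Bool) :
    (g.toGate idx).eval x V = g.eval x (V ∘ idx) := by
  cases g <;> rfl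

theorem eval_congr (x : Fin n → Bool) {v w : α → Bool} (h : ∀ a ∈ g.deps, v a = w a) :
    g.eval x v = g.eval x w := by
  cases g <;> simp_all [eval, deps]

end DagGate

structure Dag (n : ℕ) (α : Type*) where
  gate : α → DagGate n α
  rank : α → ℕ
  nodes : Finset α
  out : α
  out_mem : out ∈ nodes
  mem_of_mem_deps : ∀ a ∈ nodes, ∀ b ∈ (gate a).deps, b ∈ nodes
  rank_lt : ∀ a ∈ nodes, ∀ b ∈ (gate a).deps, rank b < rank a

namespace Dag

variable {α : Type*} (D : Dag n α)

def Consistent (x : Fin n → Bool) (v : α → Bool) : Prop :=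
  ∀ a ∈ D.nodes, v a = (D.gate a).eval x v

def energyAt (v : α → Bool) : ℕ :=
  (D.nodes.filter fun a => (D.gate a).isInner = true ∧ v a = true).card

open Classical in
/-- A topological numbering: nodes are listed by rank, ties broken by an enumeration. -/
noncomputable def index (a : α) : ℕ :=
  if h : a ∈ D.nodes then D.rank a * D.nodes.card + D.nodes.equivFin ⟨a, h⟩ else 0

def size : ℕ := (D.nodes.sup D.rank + 1) * D.nodes.card

open Classical in
noncomputable def gateAt (i : ℕ) : Gate n :=
  if h : ∃ a ∈ D.nodes, D.index a = i then (D.gate h.choose).toGate D.index else .const false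

open Classical in
noncomputable def valAt (v : α → Bool) (i : ℕ) : Bool :=
  if h : ∃ a ∈ D.nodes, D.index a = i then v h.choose else false

variable {D}

theorem index_of_mem {a : α} (ha : a ∈ D.nodes) :
    D.index a = D.rank a * D.nodes.card + D.nodes.equivFin ⟨a, ha⟩ :=
  dif_pos ha

theorem index_lt_index {a b : α} (ha : a ∈ D.nodes) (hb : b ∈ D.nodes)
    (hr : D.rank b < D.rank a) : D.index b < D.index a := by
  rw [index_of_mem ha, index_of_mem hb]
  have hlt := (D.nodes.equivFin ⟨b, hb⟩).isLt
  calc D.rank b * D.nodes.card + D.nodes.equivFin ⟨b, hb⟩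
      < (D.rank b + 1) * D.nodes.card := by rw [Nat.succ_mul]; omega
    _ ≤ D.rank a * D.nodes.card := Nat.mul_le_mul_right _ hr
    _ ≤ _ := Nat.le_add_right _ _

theorem index_lt_size {a : α} (ha : a ∈ D.nodes) : D.index a < D.size := by
  rw [index_of_mem ha, size]
  have hlt := (D.nodes.equivFin ⟨a, ha⟩).isLt
  calc D.rank a * D.nodes.card + D.nodes.equivFin ⟨a, ha⟩
      < (D.rank a + 1) * D.nodes.card := by rw [Nat.succ_mul]; omega
    _ ≤ _ := Nat.mul_le_mul_right _ (Nat.succ_le_succ (Finset.le_sup ha))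

theorem index_injOn : Set.InjOn D.index D.nodes := by
  intro a ha b hb hab
  rw [index_of_mem ha, index_of_mem hb] at hab
  have hmod := congrArg (· % D.nodes.card) hab
  simp only [Nat.mul_add_mod_self_right, Nat.mod_eq_of_lt (Fin.isLt _)] at hmod
  simpa using D.nodes.equivFin.injective (Fin.ext hmod)

theorem choose_eq_of_index {a : α} (ha : a ∈ D.nodes)
    (h : ∃ b ∈ D.nodes, D.index b = D.index a) : h.choose = a :=
  index_injOn h.choose_spec.1 ha h.choose_spec.2

theorem gateAt_index {a : α} (ha : a ∈ D.nodes) :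
    D.gateAt (D.index a) = (D.gate a).toGate D.index := by
  have h : ∃ b ∈ D.nodes, D.index b = D.index a := ⟨a, ha, rfl⟩
  rw [gateAt, dif_pos h, choose_eq_of_index ha h]

theorem valAt_index (v : α → Bool) {a : α} (ha : a ∈ D.nodes) :
    D.valAt v (D.index a) = v a := by
  have h : ∃ b ∈ D.nodes, D.index b = D.index a := ⟨a, ha, rfl⟩
  rw [valAt, dif_pos h, choose_eq_of_index ha h]

theorem gateAt_of_not_mem {i : ℕ} (h : ¬∃ a ∈ D.nodes, D.index a = i) :
    D.gateAt i = .const false :=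
  dif_neg h

theorem valAt_of_not_mem (v : α → Bool) {i : ℕ} (h : ¬∃ a ∈ D.nodes, D.index a = i) :
    D.valAt v i = false :=
  dif_neg h

variable (D)

noncomputable def toCircuit : Circuit n where
  size := D.size
  gates i := D.gateAt i
  out := ⟨D.index D.out, index_lt_size D.out_mem⟩
  wf i j hj := by
    by_cases h : ∃ a ∈ D.nodes, D.index a = i
    · obtain ⟨a, ha, hai⟩ := h
      rw [← hai, gateAt_index ha, DagGate.deps_toGate] at hj
      obtain ⟨b, hb, rfl⟩ := List.mem_map.1 hj
      exact hai ▸ index_lt_index ha (D.mem_of_mem_deps a ha b hb) (D.rank_lt a ha b hb)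
    · simp [gateAt_of_not_mem h, Gate.deps] at hj

variable {D}

theorem consistent_toCircuit {x : Fin n → Bool} {v : α → Bool} (hv : D.Consistent x v) :
    D.toCircuit.Consistent x (D.valAt v) := by
  intro i _
  change _ = (D.gateAt i).eval x _
  by_cases h : ∃ a ∈ D.nodes, D.index a = i
  · obtain ⟨a, ha, rfl⟩ := h
    rw [valAt_index v ha, gateAt_index ha, DagGate.eval_toGate, hv a ha]
    exact DagGate.eval_congr _ x fun b hb =>
      (valAt_index v (D.mem_of_mem_deps a ha b hb)).symm
  · rw [valAt_of_not_mem v h, gateAt_of_not_mem h, Gate.eval]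

theorem energyAt_toCircuit_le {x : Fin n → Bool} {v : α → Bool} (hv : D.Consistent x v) :
    D.toCircuit.energyAt x ≤ D.energyAt v := by
  classical
  refine (Finset.card_le_card_of_injOn Fin.val (t := (D.nodes.filter fun a =>
    (D.gate a).isInner = true ∧ v a = true).image D.index) ?_ Fin.val_injective.injOn).trans
    Finset.card_image_le
  intro i hi
  simp only [Finset.mem_coe, Finset.mem_filter, Finset.mem_univ, true_and] at hi
  obtain ⟨hinner, hval⟩ := hi
  change (D.gateAt i).isInner = true at hinner
  by_cases h : ∃ a ∈ D.nodes, D.index a = i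
  · obtain ⟨a, ha, hai⟩ := h
    rw [Circuit.evalGate_eq_of_consistent (consistent_toCircuit hv), ← hai,
      valAt_index v ha] at hval
    rw [← hai, gateAt_index ha, DagGate.isInner_toGate] at hinner
    exact Finset.mem_image.2 ⟨a, Finset.mem_filter.2 ⟨ha, hinner, hval⟩, hai⟩
  · simp [gateAt_of_not_mem h, Gate.isInner] at hinner

theorem EC_le {f : (Fin n → Bool) → Bool} {k : ℕ} (v : (Fin n → Bool) → α → Bool)
    (hv : ∀ x, D.Consistent x (v x)) (hout : ∀ x, v x D.out = f x)
    (henergy : ∀ x, D.energyAt (v x) ≤ k) : EC f ≤ k := by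
  have hcomp : D.toCircuit.Computes f := fun x => by
    rw [Circuit.output, Circuit.evalGate_eq_of_consistent (consistent_toCircuit (hv x)),
      toCircuit, valAt_index _ D.out_mem, hout]
  exact (EC_le_energy hcomp).trans
    (Finset.sup_le fun x _ => (energyAt_toCircuit_le (hv x)).trans (henergy x))

end Dag

/-- Nodes of the trie circuit. A word `w` lists the first `w.length` input bits in reverse
order: `pre w` tests that the input begins with `w.reverse`, `sel w` computes that test
conjoined with `f x`, and `lit j b` tests `x j = b`. -/
inductive TrieNode
  | lit (j : ℕ) (b : Bool)
  | const (b : Bool)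
  | pre (w : List Bool)
  | sel (w : List Bool)
  deriving DecidableEq

namespace TrieNode

def revPrefix (x : Fin n → Bool) (d : ℕ) : List Bool :=
  ((List.ofFn x).take d).reverse

theorem revPrefix_eq_cons_iff (x : Fin n → Bool) (w : List Bool) (b : Bool) :
    revPrefix x (w.length + 1) = b :: w ↔
      (List.ofFn x)[w.length]? = some b ∧ revPrefix x w.length = w := by
  rw [revPrefix, List.take_add_one, List.reverse_append]
  rcases h : (List.ofFn x)[w.length]? with _ | c
  · simp only [Option.toList_none, List.reverse_nil, List.nil_append, reduceCtorEq, false_and,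
      iff_false]
    intro hw
    have := congrArg List.length hw
    simp only [List.length_reverse, List.length_cons, List.length_take] at this
    omega
  · simp [revPrefix]

def ofRevWord (w : List Bool) : Fin n → Bool :=
  fun j => w.reverse.getD j false

theorem eq_ofRevWord {x : Fin n → Bool} {w : List Bool} (hw : w.length + 1 = n)
    (hx : revPrefix x w.length = w) : x = ofRevWord (x ⟨w.length, by omega⟩ :: w) := by
  have hfull : revPrefix x (w.length + 1) = x ⟨w.length, by omega⟩ :: w := by
    rw [revPrefix_eq_cons_iff]
    simp [hx, show w.length < n by omega]
  funext j
  rw [ofRevWord, ← hfull, revPrefix, List.reverse_reverse,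
    List.take_of_length_le (by simp [hw])]
  simp

def leafNode (j : ℕ) (g : Bool → Bool) : TrieNode :=
  if g false = g true then .const (g false) else .lit j (g true)

/-- Words of length one are tested by the literals themselves, which costs no `∧`-gate. -/
def matchNode : List Bool → TrieNode
  | [b] => .lit 0 b
  | w => .pre w

section Construction

variable (n) (f : (Fin n → Bool) → Bool)

def gate : TrieNode → DagGate n TrieNode
  | .lit j true => if h : j < n then .input ⟨j, h⟩ else .const false
  | .lit j false => .not (.lit j true)
  | .const b => .const b
  | .pre [] => .const true
  | .pre (b :: w) => .and (matchNode w) (.lit w.length b)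
  | .sel w =>
    if w.length + 1 < n then .or (.sel (false :: w)) (.sel (true :: w))
    else .and (matchNode w) (leafNode (n - 1) fun b => f (ofRevWord (b :: w)))

def rank : TrieNode → ℕ
  | .lit _ b => if b then 0 else 1
  | .const _ => 0
  | .pre w => w.length
  | .sel w => 2 * n - w.length

def val (x : Fin n → Bool) : TrieNode → Bool
  | .lit j b => decide ((List.ofFn x)[j]? = some b)
  | .const b => b
  | .pre w => decide (revPrefix x w.length = w)
  | .sel w => decide (revPrefix x w.length = w) && f x

def IsValid : TrieNode → Prop
  | .lit j _ => j < n
  | .const _ => True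
  | .pre w => 2 ≤ w.length ∧ w.length < n
  | .sel w => w.length < n

end Construction

variable (f : (Fin n → Bool) → Bool)

theorem gate_lit_true {j : ℕ} (hj : j < n) : gate n f (lit j true) = .input ⟨j, hj⟩ :=
  dif_pos hj

section Values

variable (x : Fin n → Bool)

theorem val_matchNode (w : List Bool) :
    val n f x (matchNode w) = decide (revPrefix x w.length = w) := by
  match w with
  | [b] => simpa [val, matchNode, revPrefix] using (revPrefix_eq_cons_iff x [] b).symm
  | [] => rfl
  | _ :: _ :: _ => rfl

theorem val_leafNode {j : ℕ} (hj : j < n) (g : Bool → Bool) :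
    val n f x (leafNode j g) = g (x ⟨j, hj⟩) := by
  unfold leafNode
  split_ifs with hg
  · cases x ⟨j, hj⟩ <;> simp [val, hg]
  · cases h : x ⟨j, hj⟩ <;> cases h0 : g false <;> cases h1 : g true <;> simp_all [val]

theorem val_eq_eval {a : TrieNode} (ha : IsValid n a) :
    val n f x a = (gate n f a).eval x (val n f x) := by
  match a, ha with
  | .lit j true, (hj : j < n) => simp [val, gate_lit_true f hj, DagGate.eval, hj]
  | .lit j false, (hj : j < n) => simp [val, gate, DagGate.eval, hj]
  | .const b, _ => rfl
  | .pre (b :: w), _ =>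
    rw [gate, DagGate.eval, val_matchNode]
    simp only [val, List.length_cons, revPrefix_eq_cons_iff, Bool.decide_and, Bool.and_comm]
  | .sel w, (hw : w.length < n) =>
    simp only [gate]
    split_ifs with hlt
    · have hbit : (List.ofFn x)[w.length]? = some (x ⟨w.length, hw⟩) := by simp [hw]
      simp only [val, DagGate.eval, List.length_cons, revPrefix_eq_cons_iff, hbit]
      cases x ⟨w.length, hw⟩ <;> simp
    · rw [DagGate.eval, val_matchNode, val_leafNode f x (by omega), val]
      by_cases hx : revPrefix x w.length = w
      · simp only [hx, decide_true, Bool.true_and]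
        have hlen : w.length = n - 1 := by omega
        conv_lhs => rw [eq_ofRevWord (by omega) hx]
        simp only [hlen]
      · simp [hx]

end Values

section Wiring

theorem isValid_matchNode {w : List Bool} (h1 : 1 ≤ w.length) (h2 : w.length < n) :
    IsValid n (matchNode w) := by
  match w with
  | [_] => show 0 < n; simp at h2; omega
  | _ :: _ :: _ => exact ⟨by simp, h2⟩

theorem rank_matchNode_le (w : List Bool) : rank n (matchNode w) ≤ w.length := by
  match w with
  | [b] => cases b <;> simp [rank, matchNode]
  | [] => rfl
  | _ :: _ :: _ => rfl

theorem isValid_leafNode {j : ℕ} (hj : j < n) (g : Bool → Bool) :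
    IsValid n (leafNode j g) := by
  unfold leafNode; split_ifs <;> trivial

theorem rank_leafNode_le (j : ℕ) (g : Bool → Bool) : rank n (leafNode j g) ≤ 1 := by
  unfold leafNode
  split_ifs
  · exact Nat.zero_le 1
  · simp only [rank]; split_ifs <;> omega

theorem isValid_of_mem_deps (hn : 2 ≤ n) {a b : TrieNode} (ha : IsValid n a)
    (hb : b ∈ (gate n f a).deps) : IsValid n b := by
  match a, ha with
  | .lit j true, (hj : j < n) => simp [gate_lit_true f hj, DagGate.deps] at hb
  | .lit j false, (hj : j < n) =>
    simp only [gate, DagGate.deps, List.mem_singleton] at hb; exact hb ▸ hj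
  | .pre (c :: w), (hw : 2 ≤ w.length + 1 ∧ w.length + 1 < n) =>
    simp only [gate, DagGate.deps, List.mem_cons, List.not_mem_nil, or_false] at hb
    rcases hb with rfl | rfl
    · exact isValid_matchNode (by omega) (by omega)
    · show w.length < n; omega
  | .sel w, (hw : w.length < n) =>
    simp only [gate] at hb
    split_ifs at hb with hlt
    · simp only [DagGate.deps, List.mem_cons, List.not_mem_nil, or_false] at hb
      rcases hb with rfl | rfl <;> exact hlt
    · simp only [DagGate.deps, List.mem_cons, List.not_mem_nil, or_false] at hb
      rcases hb with rfl | rfl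
      · exact isValid_matchNode (by omega) hw
      · exact isValid_leafNode (by omega) _

theorem rank_lt_of_mem_deps {a b : TrieNode} (ha : IsValid n a)
    (hb : b ∈ (gate n f a).deps) : rank n b < rank n a := by
  match a, ha with
  | .lit j true, (hj : j < n) => simp [gate_lit_true f hj, DagGate.deps] at hb
  | .lit j false, _ =>
    simp only [gate, DagGate.deps, List.mem_singleton] at hb; subst hb; simp [rank]
  | .pre (c :: w), (hw : 2 ≤ w.length + 1 ∧ w.length + 1 < n) =>
    simp only [gate, DagGate.deps, List.mem_cons, List.not_mem_nil, or_false] at hb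
    rcases hb with rfl | rfl
    · exact (rank_matchNode_le w).trans_lt (by simp [rank])
    · simp only [rank, List.length_cons]; split_ifs <;> omega
  | .sel w, (hw : w.length < n) =>
    simp only [gate] at hb
    split_ifs at hb with hlt
    · simp only [DagGate.deps, List.mem_cons, List.not_mem_nil, or_false] at hb
      rcases hb with rfl | rfl <;> simp only [rank, List.length_cons] <;> omega
    · simp only [DagGate.deps, List.mem_cons, List.not_mem_nil, or_false] at hb
      rcases hb with rfl | rfl
      · exact (rank_matchNode_le w).trans_lt (by simp only [rank]; omega)
      · exact (rank_leafNode_le _ _).trans_lt (by simp only [rank]; omega)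

end Wiring

noncomputable def toDag (S : Finset TrieNode) (hS : ∀ a ∈ S, IsValid n a)
    (hclosed : ∀ a ∈ S, ∀ b ∈ (gate n f a).deps, b ∈ S) (out : TrieNode) (hout : out ∈ S) :
    Dag n TrieNode where
  gate := gate n f
  rank := rank n
  nodes := S
  out := out
  out_mem := hout
  mem_of_mem_deps := hclosed
  rank_lt a ha _ := rank_lt_of_mem_deps f (hS a ha)

theorem EC_le_of_toDag {S : Finset TrieNode} (hS : ∀ a ∈ S, IsValid n a)
    (hclosed : ∀ a ∈ S, ∀ b ∈ (gate n f a).deps, b ∈ S) {out : TrieNode} (hout : out ∈ S)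
    (hf : ∀ x, val n f x out = f x) {k : ℕ}
    (henergy : ∀ x, (toDag f S hS hclosed out hout).energyAt (val n f x) ≤ k) : EC f ≤ k :=
  Dag.EC_le _ (fun x a ha => val_eq_eval f x (hS a ha)) hf henergy

def negationNodes (n : ℕ) : Finset TrieNode := (Finset.range n).image (lit · false)

theorem mem_negationNodes_of_isInner {j : ℕ} {b : Bool} (hj : j < n)
    (hinner : (gate n f (lit j b)).isInner = true) : lit j b ∈ negationNodes n := by
  cases b
  · exact Finset.mem_image.2 ⟨j, Finset.mem_range.2 hj, rfl⟩
  · simp [gate_lit_true f hj, DagGate.isInner] at hinner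

section Trie

theorem finite_setOf_isValid (n : ℕ) : {a | IsValid n a}.Finite := by
  have hwords := List.finite_length_lt Bool n
  refine Set.Finite.subset (((((Set.finite_Iio n).prod Set.finite_univ).image
    fun p : ℕ × Bool => lit p.1 p.2).union (Set.finite_range const)).union
    (hwords.image pre) |>.union (hwords.image sel)) ?_
  rintro (⟨j, b⟩ | b | w | w) ha
  · exact .inl (.inl (.inl ⟨(j, b), ⟨ha, trivial⟩, rfl⟩))
  · exact .inl (.inl (.inr ⟨b, rfl⟩))
  · exact .inl (.inr ⟨w, ha.2, rfl⟩)
  · exact .inr ⟨w, ha, rfl⟩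

noncomputable def validNodes (n : ℕ) : Finset TrieNode := (finite_setOf_isValid n).toFinset

theorem mem_validNodes {a : TrieNode} : a ∈ validNodes n ↔ IsValid n a :=
  Set.Finite.mem_toFinset _

def pathNodes (x : Fin n → Bool) : Finset TrieNode :=
  negationNodes n ∪ (Finset.Ico 2 n).image (fun d => pre (revPrefix x d)) ∪
    (Finset.range n).image (fun d => sel (revPrefix x d))

theorem card_pathNodes_le (x : Fin n → Bool) : (pathNodes x).card ≤ n + (n - 2) + n := by
  refine (Finset.card_union_le _ _).trans (Nat.add_le_add ((Finset.card_union_le _ _).trans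
    (Nat.add_le_add ?_ ?_)) ?_) <;>
  refine Finset.card_image_le.trans ?_ <;> simp

theorem mem_pathNodes {x : Fin n → Bool} {a : TrieNode} (ha : IsValid n a)
    (hinner : (gate n f a).isInner = true) (hval : val n f x a = true) : a ∈ pathNodes x := by
  simp only [pathNodes, Finset.mem_union, Finset.mem_image, Finset.mem_range, Finset.mem_Ico]
  match a, ha with
  | .lit j b, (hj : j < n) => exact .inl (.inl (mem_negationNodes_of_isInner f hj hinner))
  | .const b, _ => simp [gate, DagGate.isInner] at hinner
  | .pre w, (hw : 2 ≤ w.length ∧ w.length < n) =>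
    simp only [val, decide_eq_true_eq] at hval
    exact .inl (.inr ⟨w.length, hw, congrArg pre hval⟩)
  | .sel w, (hw : w.length < n) =>
    simp only [val, Bool.and_eq_true, decide_eq_true_eq] at hval
    exact .inr ⟨w.length, hw, congrArg sel hval.1⟩

theorem EC_le_three_mul_sub_two (hn : 2 ≤ n) : EC f ≤ 3 * n - 2 := by
  refine EC_le_of_toDag f (S := validNodes n) (fun a => mem_validNodes.1)
    (fun a ha b hb => mem_validNodes.2 (isValid_of_mem_deps f hn (mem_validNodes.1 ha) hb))
    (out := sel []) (mem_validNodes.2 (show 0 < n by omega))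
    (fun x => by simp [val, revPrefix]) fun x => ?_
  calc _ ≤ (pathNodes x).card := Finset.card_le_card fun a ha => by
        rw [Finset.mem_filter] at ha
        exact mem_pathNodes f (mem_validNodes.1 ha.1) ha.2.1 ha.2.2
    _ ≤ n + (n - 2) + n := card_pathNodes_le x
    _ = 3 * n - 2 := by omega

end Trie

section Literals

def literalNodes (n : ℕ) : Finset TrieNode :=
  (Finset.range n ×ˢ Finset.univ).image (fun p => lit p.1 p.2) ∪ Finset.univ.image const

theorem mem_literalNodes {a : TrieNode} :
    a ∈ literalNodes n ↔ (∃ j < n, ∃ b, a = lit j b) ∨ ∃ b, a = const b := by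
  simp only [literalNodes, Finset.mem_union, Finset.mem_image, Finset.mem_product,
    Finset.mem_range, Finset.mem_univ, and_true, Prod.exists]
  constructor
  · rintro (⟨j, b, hj, rfl⟩ | ⟨b, -, rfl⟩)
    exacts [.inl ⟨j, hj, b, rfl⟩, .inr ⟨b, rfl⟩]
  · rintro (⟨j, hj, b, rfl⟩ | ⟨b, rfl⟩)
    exacts [.inl ⟨j, b, hj, rfl⟩, .inr ⟨b, trivial, rfl⟩]

theorem leafNode_mem_literalNodes {j : ℕ} (hj : j < n) (g : Bool → Bool) :
    leafNode j g ∈ literalNodes n := by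
  unfold leafNode
  split_ifs <;> simp [mem_literalNodes, hj]

theorem EC_le_of_literal {out : TrieNode} (hout : out ∈ literalNodes n)
    (hf : ∀ x, val n f x out = f x) : EC f ≤ n := by
  have hvalid : ∀ a ∈ literalNodes n, IsValid n a := by
    intro a ha
    rcases mem_literalNodes.1 ha with ⟨j, hj, b, rfl⟩ | ⟨b, rfl⟩
    exacts [hj, trivial]
  refine EC_le_of_toDag f hvalid (fun a ha b hb => ?_) hout hf fun x => ?_
  · rcases mem_literalNodes.1 ha with ⟨j, hj, _ | _, rfl⟩ | ⟨c, rfl⟩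
    · simp only [gate, DagGate.deps, List.mem_singleton] at hb
      exact mem_literalNodes.2 (.inl ⟨j, hj, true, hb⟩)
    · simp [gate_lit_true f hj, DagGate.deps] at hb
    · simp [gate, DagGate.deps] at hb
  · refine (Finset.card_le_card (t := negationNodes n) fun a ha => ?_).trans
      (Finset.card_image_le.trans (Finset.card_range n).le)
    rw [Finset.mem_filter] at ha
    obtain ⟨hmem, hinner, -⟩ := ha
    rcases mem_literalNodes.1 hmem with ⟨j, hj, b, rfl⟩ | ⟨c, rfl⟩
    · exact mem_negationNodes_of_isInner f hj hinner
    · change (gate n f (const c)).isInner = true at hinner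
      simp [gate, DagGate.isInner] at hinner

theorem EC_le_of_le_one (hn : n ≤ 1) : EC f ≤ n := by
  match n, hn with
  | 0, _ =>
    refine EC_le_of_literal f (out := const (f Fin.elim0)) (by simp [mem_literalNodes])
      fun x => ?_
    rw [val, Subsingleton.elim x Fin.elim0]
  | 1, _ =>
    refine EC_le_of_literal f (leafNode_mem_literalNodes zero_lt_one fun b => f (ofRevWord [b]))
      fun x => ?_
    rw [val_leafNode f x zero_lt_one]
    exact congrArg f (eq_ofRevWord (w := []) rfl rfl).symm

end Literals

end TrieNode

/-- For any Boolean function `f : {0,1}^n → {0,1}`,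
`EC(f) ≤ 3n − 2`. -/
theorem stmt1 (n : ℕ) (f : (Fin n → Bool) → Bool) :
    EC f ≤ 3 * n - 2 := by
  rcases Nat.lt_or_ge n 2 with hn | hn
  · exact (TrieNode.EC_le_of_le_one f (by omega)).trans (by omega)
  · exact TrieNode.EC_le_three_mul_sub_two f hn
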